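/- For every set A ⊆ ℕ with 1 ∈ A, the inequality f_{A,a}(x)·f_{A,b}(x) > f_{A,a+b}(x) holds for all real x ≥ 3 and all positive integers a, b except a = b = 1; for a = b = 1 one has f_{A,1}(3)² ≥ f_{A,2}(3) (with equality iff 2 ∈ A) and f_{A,1}(x)² > f_{A,2}(x) for all x > 3. -/

import Mathlib

open scoped Classical

/-- Sum of those divisors of `j` that belong to the multiset of positive integers
with multiplicity function `μ`, counted with multiplicity: `σ_A(j) = ∑_{d ∣ j} d·μ(d)`. -/
noncomputable def sigmaA (μ : ℕ → ℕ) (j : ℕ) : ℕ := ∑ d ∈ Nat.divisors j, d * μ d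

/-- The polynomials `f_{A,n}(x)` associated with the multiset of positive integers
with multiplicity function `μ`, defined (equivalently to the generating function
`∑ f_{A,n}(x) qⁿ = ∏_{a∈A} (1/(1-q^a))^x`) by `f_{A,0} = 1` and the recurrence
`f_{A,n}(x) = (x/n) ∑_{j=1}^{n} σ_A(j) f_{A,n-j}(x)`. -/
noncomputable def fA (μ : ℕ → ℕ) : ℕ → ℝ → ℝ
  | 0, _ => 1
  | n + 1, x =>
      x / (n + 1) * ∑ j ∈ Finset.range (n + 1), (sigmaA μ (j + 1) : ℝ) * fA μ (n - j) x
  decreasing_by exact Nat.lt_succ_of_le (Nat.sub_le n j)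

/-- `f_{A,n}(x)` for an ordinary set `A` of positive integers. -/
noncomputable def fS (A : Set ℕ) : ℕ → ℝ → ℝ := fA (fun a => if a ∈ A then 1 else 0)

/-!
Write `n f_n = x ∑_{j=1}^n σ_A(j) f_{n-j}` and induct on `n = a + b`, `a ≤ b`. Split the sum
at `j = b`: for `j < b` induction gives `f_{n-j} ≤ f_a f_{b-j}`, the term `j = b` is
`σ_A(b) f_a`, and for `j > b` one has `σ_A(j) < f_b σ_A(j-b)`. The latter holds because only
`j` itself among the divisors of `j ≤ 2b` exceeds `b`, so `σ_A(j) ≤ 2b + ∑_{d ∈ A, d ≤ b} d`,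
and `f_b(x)` beats this bound for `x ≥ 3` (insert `f_t ≥ (t+1)(t+2)/2` into the recurrence
for `f_b`). The recurrences for `f_a` and `f_b` then reassemble the three pieces into
`n f_a f_b`. For `a = b = 1` everything is explicit:
`f_1² - f_2 = x (x - σ_A(2)) / 2` with `σ_A(2) = 1 + 2·[2 ∈ A]`.
-/

open Finset

lemma sum_range_add_one_mul_add_two_div_two (n : ℕ) :
    ∑ i ∈ range n, ((i : ℝ) + 1) * (i + 2) / 2 = n * (n + 1) * (n + 2) / 6 := by
  induction n with
  | zero => simp
  | succ n ih =>
    rw [sum_range_succ, ih]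
    push_cast
    ring

lemma sum_range_add_one (n : ℕ) : ∑ i ∈ range n, ((i : ℝ) + 1) = n * (n + 1) / 2 := by
  induction n with
  | zero => simp
  | succ n ih =>
    rw [sum_range_succ, ih]
    push_cast
    ring

section

variable {μ : ℕ → ℕ}

lemma fA_zero (x : ℝ) : fA μ 0 x = 1 := by
  rw [fA]

lemma fA_succ (n : ℕ) (x : ℝ) :
    fA μ (n + 1) x = x / (n + 1) * ∑ j ∈ range (n + 1), (sigmaA μ (j + 1) : ℝ) * fA μ (n - j) x := by
  rw [fA]

lemma natCast_mul_fA (n : ℕ) (x : ℝ) :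
    n * fA μ n x = x * ∑ j ∈ range n, (sigmaA μ (j + 1) : ℝ) * fA μ (n - 1 - j) x := by
  cases n with
  | zero => simp
  | succ n =>
    rw [fA_succ, add_tsub_cancel_right]
    push_cast
    field_simp

lemma sigmaA_one : sigmaA μ 1 = μ 1 := by
  simp [sigmaA]

lemma fA_one (x : ℝ) : fA μ 1 x = x * μ 1 := by
  rw [fA_succ]
  simp [sigmaA_one, fA_zero]

lemma sigmaA_two : sigmaA μ 2 = μ 1 + 2 * μ 2 := by
  rw [sigmaA, Nat.prime_two.divisors, sum_pair (by norm_num), one_mul]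

lemma le_sigmaA {j : ℕ} (hj : 1 ≤ j) : μ 1 ≤ sigmaA μ j := by
  rw [sigmaA]
  simpa using single_le_sum (f := fun d => d * μ d) (fun _ _ => Nat.zero_le _)
    (Nat.one_mem_divisors.2 (by omega : j ≠ 0))

lemma add_mul_le_sigmaA {j : ℕ} (hj : 2 ≤ j) : μ 1 + j * μ j ≤ sigmaA μ j := by
  have hsub : ({1, j} : Finset ℕ) ⊆ j.divisors :=
    insert_subset (Nat.one_mem_divisors.2 (by omega))
      (singleton_subset_iff.2 (Nat.mem_divisors_self j (by omega)))
  rw [sigmaA]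
  simpa [sum_pair (show 1 ≠ j by omega)] using sum_le_sum_of_subset hsub (f := fun d => d * μ d)

lemma sigmaA_le_two_mul_add_sum (hμ : ∀ d, μ d ≤ 1) {m b : ℕ} (hm : m ≤ 2 * b) :
    sigmaA μ m ≤ 2 * b + ∑ d ∈ range (b + 1), d * μ d := by
  rcases Nat.eq_zero_or_pos m with rfl | hm0
  · simp [sigmaA]
  have hproper : m.properDivisors ⊆ range (b + 1) := by
    intro d hd
    obtain ⟨⟨k, rfl⟩, hlt⟩ := Nat.mem_properDivisors.1 hd
    have hk : 2 ≤ k := by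
      rcases k with _ | _ | k <;> simp_all
    rw [mem_range]
    nlinarith
  rw [sigmaA, ← Nat.cons_self_properDivisors hm0.ne', sum_cons]
  refine add_le_add ?_ (sum_le_sum_of_subset hproper)
  calc m * μ m ≤ m * 1 := Nat.mul_le_mul_left _ (hμ m)
    _ ≤ 2 * b := by omega

section

variable (hμ1 : μ 1 = 1)
include hμ1

lemma one_le_sigmaA {j : ℕ} (hj : 1 ≤ j) : 1 ≤ sigmaA μ j :=
  hμ1 ▸ le_sigmaA hj

-- `(n + 1) (n + 2) / 2 = f_{{1},n}(3)`.
lemma add_one_mul_add_two_div_two_le_fA {x : ℝ} (hx : 3 ≤ x) (n : ℕ) :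
    ((n : ℝ) + 1) * (n + 2) / 2 ≤ fA μ n x := by
  induction n using Nat.strong_induction_on with
  | _ n ih =>
  rcases Nat.eq_zero_or_pos n with rfl | hn
  · simp [fA_zero]
  have hterm : ∀ j ∈ range n,
      3 * fA μ (n - 1 - j) x ≤ x * ((sigmaA μ (j + 1) : ℝ) * fA μ (n - 1 - j) x) := by
    intro j hj
    have hf : 0 ≤ fA μ (n - 1 - j) x := le_trans (by positivity) (ih _ (by omega))
    have hσ : (1 : ℝ) ≤ sigmaA μ (j + 1) := by exact_mod_cast one_le_sigmaA hμ1 (by omega)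
    rw [← mul_assoc]
    exact mul_le_mul_of_nonneg_right (by nlinarith) hf
  have hmul : (n : ℝ) * (((n : ℝ) + 1) * (n + 2) / 2) ≤ n * fA μ n x :=
    calc (n : ℝ) * (((n : ℝ) + 1) * (n + 2) / 2)
        = 3 * ∑ j ∈ range n, ((j : ℝ) + 1) * (j + 2) / 2 := by
          rw [sum_range_add_one_mul_add_two_div_two]; ring
      _ ≤ 3 * ∑ j ∈ range n, fA μ j x := by
          gcongr with j hj
          exact ih j (mem_range.1 hj)
      _ = ∑ j ∈ range n, 3 * fA μ (n - 1 - j) x := by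
          rw [mul_sum, sum_range_reflect (fun j => 3 * fA μ j x)]
      _ ≤ n * fA μ n x := by
          rw [natCast_mul_fA, mul_sum]
          exact sum_le_sum hterm
  exact le_of_mul_le_mul_left hmul (by exact_mod_cast hn)

lemma fA_pos {x : ℝ} (hx : 3 ≤ x) (n : ℕ) : 0 < fA μ n x :=
  lt_of_lt_of_le (by positivity) (add_one_mul_add_two_div_two_le_fA hμ1 hx n)

lemma fA_one_mul_self_sub_fA_two (x : ℝ) :
    fA μ 1 x * fA μ 1 x - fA μ 2 x = x * (x - (1 + 2 * μ 2)) / 2 := by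
  rw [fA_succ 1, sum_range_succ, sum_range_one, fA_one, sigmaA_one, sigmaA_two, hμ1]
  rw [Nat.sub_self, fA_zero]
  push_cast
  ring

variable (hμ : ∀ d, μ d ≤ 1)
include hμ

-- Bounds the summand `x σ_A(d) f_t`, `d + t = b`, of `b f_b`. The left-hand sides for
-- `2 ≤ d ≤ b`, plus `3 b (b + 1) / 2` for `d = 1`, add up to `b (2b + ∑_{d ≤ b} d μ(d))`.
lemma add_lt_mul_sigmaA_mul {x : ℝ} (hx : 3 ≤ x) {b d t : ℕ} (hd : 2 ≤ d) (hb : d + t = b)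
    {y : ℝ} (hy : ((t : ℝ) + 1) * (t + 2) / 2 ≤ y) :
    3 * (((t : ℝ) + 1) * (t + 2) / 2) + b * (d * μ d - (d - 1)) < x * (sigmaA μ d * y) := by
  have hσ : (1 : ℝ) + d * μ d ≤ sigmaA μ d := by
    have := add_mul_le_sigmaA (μ := μ) hd
    rw [hμ1] at this
    exact_mod_cast this
  have hb' : (b : ℝ) = d + t := by exact_mod_cast hb.symm
  have hd' : (2 : ℝ) ≤ d := by exact_mod_cast hd
  have ht : (0 : ℝ) ≤ t := t.cast_nonneg
  have hμd : μ d = 0 ∨ μ d = 1 := by have := hμ d; omega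
  calc 3 * (((t : ℝ) + 1) * (t + 2) / 2) + b * (d * μ d - (d - 1))
      < 3 * ((1 + d * μ d) * (((t : ℝ) + 1) * (t + 2) / 2)) := by
        rw [hb']
        rcases hμd with h | h <;> simp only [h] <;> push_cast <;> nlinarith [mul_nonneg ht ht]
    _ ≤ x * (sigmaA μ d * y) := by gcongr

lemma two_mul_add_sum_lt_fA {x : ℝ} (hx : 3 ≤ x) {b : ℕ} (hb : 2 ≤ b) :
    2 * b + ∑ d ∈ range (b + 1), (d : ℝ) * μ d < fA μ b x := by
  obtain ⟨c, rfl⟩ : ∃ c, b = c + 1 := ⟨b - 1, by omega⟩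
  have hS : ∑ d ∈ range (c + 1 + 1), (d : ℝ) * μ d
      = 1 + ∑ i ∈ range c, ((i : ℝ) + 2) * μ (i + 2) := by
    rw [sum_range_succ', sum_range_succ', add_assoc, add_comm]
    simp only [zero_add, hμ1, CharP.cast_eq_zero, zero_mul, add_zero, Nat.cast_one, mul_one]
    congr 1
    refine sum_congr rfl fun i _ => ?_
    push_cast
    ring_nf
  have hℓ := sum_range_add_one_mul_add_two_div_two (c + 1)
  rw [sum_range_succ, ← sum_range_reflect] at hℓ
  have hterm : ∀ i ∈ range c,
      3 * ((((c - 1 - i : ℕ) : ℝ) + 1) * ((c - 1 - i : ℕ) + 2) / 2)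
        + (c + 1) * ((i + 2) * μ (i + 2) - (i + 1))
      < x * (sigmaA μ (i + 1 + 1) * fA μ (c - (i + 1)) x) := by
    intro i hi
    have hic := mem_range.1 hi
    have h := add_lt_mul_sigmaA_mul hμ1 hμ hx (b := c + 1) (d := i + 2) (by omega) (by omega)
      (add_one_mul_add_two_div_two_le_fA hμ1 hx (c - 1 - i))
    rw [show c - (i + 1) = c - 1 - i by omega]
    push_cast at h
    linarith
  have hfirst : 3 * ((c + 1) * (c + 2) / 2) ≤ x * fA μ c x :=
    mul_le_mul hx (add_one_mul_add_two_div_two_le_fA hμ1 hx c) (by positivity) (by linarith)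
  have hsum := sum_lt_sum_of_nonempty (nonempty_range_iff.2 (by omega)) hterm
  rw [sum_add_distrib, ← mul_sum, ← mul_sum, sum_sub_distrib, sum_range_add_one] at hsum
  have hrec := natCast_mul_fA (μ := μ) (c + 1) x
  rw [sum_range_succ', mul_add, mul_sum] at hrec
  simp only [add_tsub_cancel_right, zero_add, sigmaA_one, hμ1, Nat.cast_one, one_mul,
    Nat.sub_zero] at hrec
  push_cast at hrec hS hℓ ⊢
  rw [hS]
  refine lt_of_mul_lt_mul_left ?_ (by positivity : (0 : ℝ) ≤ c + 1)
  nlinarith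

lemma sigmaA_add_lt_fA_mul {x : ℝ} (hx : 3 ≤ x) {b k : ℕ} (hb : 2 ≤ b) (hk : 1 ≤ k)
    (hkb : k ≤ b) : (sigmaA μ (b + k) : ℝ) < fA μ b x * sigmaA μ k := by
  have hσ : (sigmaA μ (b + k) : ℝ) ≤ 2 * b + ∑ d ∈ range (b + 1), (d : ℝ) * μ d := by
    exact_mod_cast sigmaA_le_two_mul_add_sum hμ (by omega : b + k ≤ 2 * b)
  have hk' : (1 : ℝ) ≤ sigmaA μ k := by exact_mod_cast one_le_sigmaA hμ1 hk
  nlinarith [two_mul_add_sum_lt_fA hμ1 hμ hx hb, fA_pos hμ1 hx b]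

lemma sum_sigmaA_add_mul_fA_lt {x : ℝ} (hx : 3 ≤ x) {a b : ℕ} (ha : 1 ≤ a) (hab : a ≤ b)
    (hb : 2 ≤ b) :
    ∑ i ∈ range a, (sigmaA μ (b + (i + 1)) : ℝ) * fA μ (a - 1 - i) x
      < fA μ b x * ∑ i ∈ range a, (sigmaA μ (i + 1) : ℝ) * fA μ (a - 1 - i) x := by
  rw [mul_sum]
  refine sum_lt_sum_of_nonempty (nonempty_range_iff.2 (by omega)) fun i hi => ?_
  have hia := mem_range.1 hi
  rw [← mul_assoc]
  exact mul_lt_mul_of_pos_right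
    (sigmaA_add_lt_fA_mul hμ1 hμ hx hb (by omega) (by omega)) (fA_pos hμ1 hx _)

lemma fA_add_lt_mul_of_le {x : ℝ} (hx : 3 ≤ x) {a b : ℕ} (ha : 1 ≤ a) (hab : a ≤ b)
    (hb : 2 ≤ b) (ih : ∀ k, 1 ≤ k → k < b → fA μ (a + k) x ≤ fA μ a x * fA μ k x) :
    fA μ (a + b) x < fA μ a x * fA μ b x := by
  obtain ⟨c, rfl⟩ : ∃ c, b = c + 1 := ⟨b - 1, by omega⟩
  set P := ∑ j ∈ range c, (sigmaA μ (j + 1) : ℝ) * fA μ (c - j) x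
  set Q := ∑ i ∈ range a, (sigmaA μ (i + 1) : ℝ) * fA μ (a - 1 - i) x
  have hrec_b : ((c + 1 : ℕ) : ℝ) * fA μ (c + 1) x = x * (P + sigmaA μ (c + 1)) := by
    rw [natCast_mul_fA, add_tsub_cancel_right, sum_range_succ, Nat.sub_self, fA_zero, mul_one]
  have hrec_a : (a : ℝ) * fA μ a x = x * Q := natCast_mul_fA a x
  have hlow : ∑ j ∈ range c, (sigmaA μ (j + 1) : ℝ) * fA μ (a + (c + 1) - 1 - j) x
      ≤ fA μ a x * P := by
    rw [mul_sum]
    refine sum_le_sum fun j hj => ?_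
    have hjc := mem_range.1 hj
    rw [show a + (c + 1) - 1 - j = a + (c - j) by omega, mul_left_comm]
    exact mul_le_mul_of_nonneg_left (ih (c - j) (by omega) (by omega)) (by positivity)
  have hhigh := sum_sigmaA_add_mul_fA_lt hμ1 hμ hx ha hab hb
  have hsum : ∑ j ∈ range (a + (c + 1)), (sigmaA μ (j + 1) : ℝ) * fA μ (a + (c + 1) - 1 - j) x
      < fA μ a x * P + sigmaA μ (c + 1) * fA μ a x + fA μ (c + 1) x * Q := by
    have hsplit := sum_range_add
      (fun j => (sigmaA μ (j + 1) : ℝ) * fA μ (a + (c + 1) - 1 - j) x) (c + 1) a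
    rw [add_comm (c + 1) a, sum_range_succ] at hsplit
    rw [hsplit, show a + (c + 1) - 1 - c = a by omega]
    have hidx : ∀ i ∈ range a, (sigmaA μ (c + 1 + i + 1) : ℝ) * fA μ (a + (c + 1) - 1 - (c + 1 + i)) x
        = sigmaA μ (c + 1 + (i + 1)) * fA μ (a - 1 - i) x := fun i hi => by
      rw [show a + (c + 1) - 1 - (c + 1 + i) = a - 1 - i by omega, add_assoc (c + 1) i 1]
    rw [sum_congr rfl hidx]
    linarith
  refine lt_of_mul_lt_mul_left (a := ((a + (c + 1) : ℕ) : ℝ)) ?_ (by positivity)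
  rw [natCast_mul_fA]
  calc x * ∑ j ∈ range (a + (c + 1)), (sigmaA μ (j + 1) : ℝ) * fA μ (a + (c + 1) - 1 - j) x
      < x * (fA μ a x * P + sigmaA μ (c + 1) * fA μ a x + fA μ (c + 1) x * Q) :=
        mul_lt_mul_of_pos_left hsum (by linarith)
    _ = ((a + (c + 1) : ℕ) : ℝ) * (fA μ a x * fA μ (c + 1) x) := by
        push_cast at hrec_b ⊢
        linear_combination (-fA μ a x) * hrec_b - fA μ (c + 1) x * hrec_a

lemma fA_add_lt_mul_of_forall_lt {x : ℝ} (hx : 3 ≤ x) {a b : ℕ} (ha : 1 ≤ a) (hb : 1 ≤ b)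
    (h11 : ¬(a = 1 ∧ b = 1))
    (ih : ∀ a' b', 1 ≤ a' → 1 ≤ b' → a' + b' < a + b → fA μ (a' + b') x ≤ fA μ a' x * fA μ b' x) :
    fA μ (a + b) x < fA μ a x * fA μ b x := by
  rcases le_total a b with hab | hba
  · exact fA_add_lt_mul_of_le hμ1 hμ hx ha hab (by omega) fun k hk hkb => ih a k ha hk (by omega)
  · rw [add_comm, mul_comm]
    exact fA_add_lt_mul_of_le hμ1 hμ hx hb hba (by omega) fun k hk hka => ih b k hb hk (by omega)

lemma fA_add_le_mul {x : ℝ} (hx : 3 ≤ x) {a b : ℕ} (ha : 1 ≤ a) (hb : 1 ≤ b) :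
    fA μ (a + b) x ≤ fA μ a x * fA μ b x := by
  induction hn : a + b using Nat.strong_induction_on generalizing a b with
  | _ n ih =>
  subst hn
  by_cases h11 : a = 1 ∧ b = 1
  · obtain ⟨rfl, rfl⟩ := h11
    have h := fA_one_mul_self_sub_fA_two hμ1 (μ := μ) x
    have hμ2 : (μ 2 : ℝ) ≤ 1 := by exact_mod_cast hμ 2
    nlinarith
  · exact (fA_add_lt_mul_of_forall_lt hμ1 hμ hx ha hb h11
      fun a' b' ha' hb' hlt => ih _ hlt ha' hb' rfl).le

lemma fA_add_lt_mul {x : ℝ} (hx : 3 ≤ x) {a b : ℕ} (ha : 1 ≤ a) (hb : 1 ≤ b)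
    (h11 : ¬(a = 1 ∧ b = 1)) : fA μ (a + b) x < fA μ a x * fA μ b x :=
  fA_add_lt_mul_of_forall_lt hμ1 hμ hx ha hb h11
    fun _ _ ha' hb' _ => fA_add_le_mul hμ1 hμ hx ha' hb'

end

end

theorem stmt_12_general (A : Set ℕ) (h1 : 1 ∈ A) :
    (∀ a b : ℕ, 1 ≤ a → 1 ≤ b → ¬(a = 1 ∧ b = 1) → ∀ x : ℝ, 3 ≤ x →
      fS A a x * fS A b x > fS A (a + b) x) ∧
    fS A 1 3 * fS A 1 3 ≥ fS A 2 3 ∧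
    (fS A 1 3 * fS A 1 3 = fS A 2 3 ↔ 2 ∈ A) ∧
    (∀ x : ℝ, 3 < x → fS A 1 x * fS A 1 x > fS A 2 x) := by
  set μ : ℕ → ℕ := fun a => if a ∈ A then 1 else 0
  have hμ1 : μ 1 = 1 := if_pos h1
  have hμ : ∀ d, μ d ≤ 1 := fun d => by dsimp only [μ]; split <;> omega
  have hsq (x : ℝ) := fA_one_mul_self_sub_fA_two hμ1 x
  have hμ2 : (μ 2 : ℝ) = if 2 ∈ A then 1 else 0 := by simp only [μ]; push_cast; rfl
  refine ⟨fun a b ha hb h11 x hx => fA_add_lt_mul hμ1 hμ hx ha hb h11, ?_, ?_, fun x hx => ?_⟩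
  · have := hsq 3
    split_ifs at hμ2 <;> simp only [fS] <;> nlinarith
  · have := hsq 3
    simp only [fS]
    split_ifs at hμ2 with h2 <;> simp only [h2, iff_true, iff_false] <;> nlinarith
  · have := hsq x
    split_ifs at hμ2 <;> simp only [fS] <;> nlinarith

/-- Polynomization of the Bessenrodt-Ono inequality for a set A of positive integers with 1 in A: f_{A,a}(x) f_{A,b}(x) > f_{A,a+b}(x) for all real x >= 3 and a, b >= 1 except a = b = 1; for a = b = 1, f_{A,1}(3)^2 >= f_{A,2}(3) (equality iff 2 in A) and f_{A,1}(x)^2 > f_{A,2}(x) for x > 3. -/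
theorem stmt_12 (A : Set ℕ) (h0 : 0 ∉ A) (h1 : 1 ∈ A) :
    (∀ a b : ℕ, 1 ≤ a → 1 ≤ b → ¬(a = 1 ∧ b = 1) → ∀ x : ℝ, 3 ≤ x →
      fS A a x * fS A b x > fS A (a + b) x) ∧
    fS A 1 3 * fS A 1 3 ≥ fS A 2 3 ∧
    (fS A 1 3 * fS A 1 3 = fS A 2 3 ↔ 2 ∈ A) ∧
    (∀ x : ℝ, 3 < x → fS A 1 x * fS A 1 x > fS A 2 x) :=
  stmt_12_general A h1
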